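/- For the planar system Σ' = -Σ(1 - 2A - C₂(Σ² - A²)), A' = A(1 + 2Σ + C₂(Σ² - A²)) (the case v = -1), the point (Σ,A) = (-1/2, 1/2) is an equilibrium whose Jacobian has eigenvalues ±√(C₂ - 1); hence it is a hyperbolic saddle for C₂ > 1 and non-hyperbolic for C₂ ≤ 1. -/

import Mathlib

noncomputable section

/-- Σ-component of the v = -1 extreme-tilt system. -/
def fET (C₂ S A : ℝ) : ℝ := -S * (1 - 2 * A - C₂ * (S ^ 2 - A ^ 2))

/-- A-component of the v = -1 extreme-tilt system. -/
def gET (C₂ S A : ℝ) : ℝ := A * (1 + 2 * S + C₂ * (S ^ 2 - A ^ 2))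

/-- Jacobian matrix of the planar system at `(S, A)`. -/
def JacET (C₂ S A : ℝ) : Matrix (Fin 2) (Fin 2) ℝ :=
  !![deriv (fun s => fET C₂ s A) S, deriv (fun a => fET C₂ S a) A;
     deriv (fun s => gET C₂ s A) S, deriv (fun a => gET C₂ S a) A]

/-! At `(-1/2, 1/2)` the Jacobian has trace `0` and determinant `1 - C₂`, so its characteristic
polynomial is `X² - (C₂ - 1)`. -/

open Module.End

theorem Matrix.hasEigenvalue_toLin'_fin_two_iff {R : Type*} [CommRing R] [IsDomain R]
    (M : Matrix (Fin 2) (Fin 2) R) (μ : R) :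
    HasEigenvalue (Matrix.toLin' M) μ ↔ μ ^ 2 - M.trace * μ + M.det = 0 := by
  rw [hasEigenvalue_iff_isRoot_charpoly, Matrix.charpoly_toLin', Matrix.charpoly_fin_two]
  simp

theorem jacET_eq (C₂ S A : ℝ) :
    JacET C₂ S A = !![3 * C₂ * S ^ 2 - C₂ * A ^ 2 + 2 * A - 1, 2 * S * (1 - C₂ * A);
      2 * A * (1 + C₂ * S), 1 + 2 * S + C₂ * S ^ 2 - 3 * C₂ * A ^ 2] := by
  simp (disch := fun_prop) only [JacET, fET, gET, deriv_fun_mul, deriv_fun_sub, deriv_fun_add,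
    deriv_neg'', deriv_const, deriv_id'', deriv_pow_field, deriv_const_mul_id]
  ring_nf

theorem jacET_saddle (C₂ : ℝ) :
    JacET C₂ (-(1/2)) (1/2) = !![C₂ / 2, C₂ / 2 - 1; 1 - C₂ / 2, -(C₂ / 2)] := by
  rw [jacET_eq]
  ring_nf

theorem trace_jacET_saddle (C₂ : ℝ) : (JacET C₂ (-(1/2)) (1/2)).trace = 0 := by
  rw [jacET_saddle, Matrix.trace_fin_two]
  simp

theorem det_jacET_saddle (C₂ : ℝ) : (JacET C₂ (-(1/2)) (1/2)).det = 1 - C₂ := by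
  rw [jacET_saddle, Matrix.det_fin_two]
  simp only [Matrix.of_apply, Matrix.cons_val', Matrix.cons_val_zero, Matrix.cons_val_one,
    Matrix.cons_val_fin_one]
  ring

theorem hasEigenvalue_map_jacET_saddle_iff {K : Type*} [Field K] (f : ℝ →+* K) (C₂ : ℝ) (μ : K) :
    HasEigenvalue (Matrix.toLin' ((JacET C₂ (-(1/2)) (1/2)).map f)) μ ↔ μ ^ 2 = f C₂ - 1 := by
  rw [Matrix.hasEigenvalue_toLin'_fin_two_iff, ← AddMonoidHom.map_trace, ← RingHom.mapMatrix_apply,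
    ← RingHom.map_det, trace_jacET_saddle, det_jacET_saddle, map_zero, map_sub, map_one]
  constructor <;> intro h <;> linear_combination h

theorem hasEigenvalue_jacET_saddle_iff (C₂ μ : ℝ) :
    HasEigenvalue (Matrix.toLin' (JacET C₂ (-(1/2)) (1/2))) μ ↔ μ ^ 2 = C₂ - 1 := by
  simpa using hasEigenvalue_map_jacET_saddle_iff (RingHom.id ℝ) C₂ μ

/-- The point `(Σ, A) = (-1/2, 1/2)` is an equilibrium of the v = -1 extreme-tilt
system whose Jacobian has eigenvalues `±√(C₂ - 1)` (i.e. its eigenvalues over ℂ are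
exactly the square roots of `C₂ - 1`); hence it is a hyperbolic saddle for `C₂ > 1`
and non-hyperbolic for `C₂ ≤ 1`. -/
theorem P7_saddle_or_nonhyperbolic (C₂ : ℝ) :
    fET C₂ (-(1/2)) (1/2) = 0 ∧ gET C₂ (-(1/2)) (1/2) = 0 ∧
    (∀ μ : ℂ,
      Module.End.HasEigenvalue
        (Matrix.toLin' ((JacET C₂ (-(1/2)) (1/2)).map (algebraMap ℝ ℂ))) μ ↔
      μ ^ 2 = (C₂ : ℂ) - 1) ∧
    (1 < C₂ →
      Module.End.HasEigenvalue (Matrix.toLin' (JacET C₂ (-(1/2)) (1/2)))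
        (Real.sqrt (C₂ - 1)) ∧
      Module.End.HasEigenvalue (Matrix.toLin' (JacET C₂ (-(1/2)) (1/2)))
        (-Real.sqrt (C₂ - 1)) ∧
      0 < Real.sqrt (C₂ - 1)) ∧
    (C₂ ≤ 1 → ∃ μ : ℂ,
      Module.End.HasEigenvalue
        (Matrix.toLin' ((JacET C₂ (-(1/2)) (1/2)).map (algebraMap ℝ ℂ))) μ ∧
      μ.re = 0) := by
  have hC (μ : ℂ) := hasEigenvalue_map_jacET_saddle_iff (algebraMap ℝ ℂ) C₂ μ
  refine ⟨by norm_num [fET], by norm_num [gET], hC, fun h => ?_, fun h => ?_⟩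
  · have hsq : Real.sqrt (C₂ - 1) ^ 2 = C₂ - 1 := Real.sq_sqrt (by linarith)
    exact ⟨(hasEigenvalue_jacET_saddle_iff C₂ _).mpr hsq,
      (hasEigenvalue_jacET_saddle_iff C₂ _).mpr (by rwa [neg_sq]),
      Real.sqrt_pos.mpr (by linarith)⟩
  · refine ⟨Real.sqrt (1 - C₂) * Complex.I, (hC _).mpr ?_, by simp⟩
    show _ = (C₂ : ℂ) - 1
    have hsq : Real.sqrt (1 - C₂) ^ 2 = 1 - C₂ := Real.sq_sqrt (by linarith)
    rw [mul_pow, Complex.I_sq, ← Complex.ofReal_pow, hsq]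
    push_cast
    ring
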